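/- arXiv:0809.1555 — 4 statements merged into one kernel-verified Lean document; each statement's English description precedes it below -/
import Mathlib

section
/- Let a, b > 0 with 2a + b < 2 and define, for x ∈ (0, π), y₀(x) = (1/b)·(sin x)^{a/b}·(cot(x/2))^{1/b}·∫₀ˣ (sin t)^{-a/b}·(sin t)^{-1}·(tan(t/2))^{1/b} dt. Then lim_{x→0⁺} y₀(x) = 1/(1−a). -/
open MeasureTheory Set Filter Topology intervalIntegral
open scoped Real

/-! With `W x = sin x ^ p * tan (x / 2) ^ q` one has `W' = W (q + p cos x) / sin x`, so for
`|p| < q` the integrand `W / sin` is `W'` times the positive continuous factor `(q + p cos x)⁻¹`.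
Since `W x = 2 ^ p sin (x / 2) ^ (p + q) cos (x / 2) ^ (p - q)` extends continuously by `0` at
`x = 0`, the nonnegative derivative `W'` is integrable near `0`, and L'Hôpital's rule gives
`(∫₀ˣ W / sin) / W x → 1 / (q + p)`. The theorem is the case `p = -a/b`, `q = 1/b`. -/

namespace Real

variable {p q x : ℝ}

lemma tan_half_pos (hx : x ∈ Ioo 0 π) : 0 < tan (x / 2) :=
  tan_pos_of_pos_of_lt_pi_div_two (by linarith [hx.1]) (by linarith [hx.2])

lemma cos_half_pos (hx : x ∈ Ioo (-π) π) : 0 < cos (x / 2) :=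
  cos_pos_of_mem_Ioo ⟨by linarith [hx.1], by linarith [hx.2]⟩

lemma sin_half_pos (hx : x ∈ Ioo 0 π) : 0 < sin (x / 2) :=
  sin_pos_of_pos_of_lt_pi (by linarith [hx.1]) (by linarith [hx.2, pi_pos])

lemma add_mul_cos_pos (hpq : |p| < q) (x : ℝ) : 0 < q + p * cos x := by
  have : |p * cos x| ≤ |p| := by
    rw [abs_mul]; exact mul_le_of_le_one_right (abs_nonneg p) (abs_cos_le_one x)
  linarith [neg_abs_le (p * cos x)]

lemma sin_rpow_mul_tan_half_rpow_eq (hx : x ∈ Ioo 0 π) (p q : ℝ) :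
    sin x ^ p * tan (x / 2) ^ q = 2 ^ p * sin (x / 2) ^ (p + q) * cos (x / 2) ^ (p - q) := by
  have hs : 0 < sin (x / 2) := sin_half_pos hx
  have hc : 0 < cos (x / 2) := cos_half_pos ⟨by linarith [hx.1, pi_pos], hx.2⟩
  rw [show x = 2 * (x / 2) by ring, sin_two_mul, tan_eq_sin_div_cos,
    mul_div_cancel_left₀ _ two_ne_zero, mul_rpow (by positivity) hc.le, mul_rpow zero_le_two hs.le,
    div_rpow hs.le hc.le, rpow_add hs, rpow_sub hc]
  field_simp

lemma continuousAt_two_rpow_mul_sin_half_rpow_mul_cos_half_rpow (hpq : 0 ≤ p + q)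
    (hx : x ∈ Ioo (-π) π) :
    ContinuousAt (fun x => 2 ^ p * sin (x / 2) ^ (p + q) * cos (x / 2) ^ (p - q)) x := by
  have hsin : ContinuousAt (fun x => sin (x / 2) ^ (p + q)) x :=
    ContinuousAt.rpow_const (by fun_prop) (Or.inr hpq)
  have hcos : ContinuousAt (fun x => cos (x / 2) ^ (p - q)) x :=
    ContinuousAt.rpow_const (by fun_prop) (Or.inl (cos_half_pos hx).ne')
  exact (continuousAt_const.mul hsin).mul hcos

lemma tendsto_sin_rpow_mul_tan_half_rpow_zero (hpq : 0 < p + q) :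
    Tendsto (fun x => sin x ^ p * tan (x / 2) ^ q) (𝓝[>] 0) (𝓝 0) := by
  have h := ((continuousAt_two_rpow_mul_sin_half_rpow_mul_cos_half_rpow hpq.le
    ⟨neg_neg_iff_pos.2 pi_pos, pi_pos⟩).tendsto).mono_left (nhdsWithin_le_nhds (s := Ioi 0))
  rw [zero_div, sin_zero, zero_rpow hpq.ne', mul_zero, zero_mul] at h
  refine h.congr' ?_
  filter_upwards [Ioo_mem_nhdsGT pi_pos] with x hx
  exact (sin_rpow_mul_tan_half_rpow_eq hx p q).symm

lemma hasDerivAt_sin_rpow_mul_tan_half_rpow (hx : x ∈ Ioo 0 π) (p q : ℝ) :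
    HasDerivAt (fun x => sin x ^ p * tan (x / 2) ^ q)
      (sin x ^ p * tan (x / 2) ^ q * (q + p * cos x) / sin x) x := by
  have hs : 0 < sin x := sin_pos_of_pos_of_lt_pi hx.1 hx.2
  have hc2 : 0 < cos (x / 2) := cos_half_pos ⟨by linarith [hx.1, pi_pos], hx.2⟩
  have ht : 0 < tan (x / 2) := tan_half_pos hx
  have hsin := (hasDerivAt_sin x).rpow_const (p := p) (Or.inl hs.ne')
  have hhalf : HasDerivAt (fun y : ℝ => y / 2) (1 / 2) x := (hasDerivAt_id' x).div_const 2
  have htan := (hasDerivAt_tan hc2.ne').comp x hhalf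
  refine (hsin.mul (htan.rpow_const (p := q) (Or.inl ht.ne'))).congr_deriv ?_
  rw [Function.comp_apply, rpow_sub hs, rpow_sub ht, rpow_one, rpow_one, tan_eq_sin_div_cos,
    show x = 2 * (x / 2) by ring, sin_two_mul, cos_two_mul, mul_div_cancel_left₀ _ two_ne_zero]
  field_simp
  ring

lemma intervalIntegrable_sin_rpow_mul_inv_mul_tan_half_rpow (hpq : |p| < q) (hx : x ∈ Ioo 0 π) :
    IntervalIntegrable (fun t => sin t ^ p * (sin t)⁻¹ * tan (t / 2) ^ q) volume 0 x := by
  have hIcc : Icc 0 x ⊆ Ioo (-π) π := Icc_subset_Ioo (by linarith [pi_pos]) hx.2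
  have hIoo : Ioo 0 x ⊆ Ioo 0 π := Ioo_subset_Ioo_right hx.2.le
  have hderiv : IntervalIntegrable
      (fun t => sin t ^ p * tan (t / 2) ^ q * (q + p * cos t) / sin t) volume 0 x := by
    refine intervalIntegrable_deriv_of_nonneg
      (g := fun t => 2 ^ p * sin (t / 2) ^ (p + q) * cos (t / 2) ^ (p - q)) ?_ ?_ ?_
    · rw [uIcc_of_le hx.1.le]
      exact fun t ht => (continuousAt_two_rpow_mul_sin_half_rpow_mul_cos_half_rpow
        (by linarith [neg_abs_le p]) (hIcc ht)).continuousWithinAt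
    · simp only [min_eq_left hx.1.le, max_eq_right hx.1.le]
      intro t ht
      refine (hasDerivAt_sin_rpow_mul_tan_half_rpow (hIoo ht) p q).congr_of_eventuallyEq ?_
      filter_upwards [isOpen_Ioo.mem_nhds (hIoo ht)] with s hs
      exact (sin_rpow_mul_tan_half_rpow_eq hs p q).symm
    · simp only [min_eq_left hx.1.le, max_eq_right hx.1.le]
      intro t ht
      have := sin_pos_of_pos_of_lt_pi (hIoo ht).1 (hIoo ht).2
      have := tan_half_pos (hIoo ht)
      have := add_mul_cos_pos hpq t
      positivity
  refine (hderiv.mul_continuousOn (g := fun t => (q + p * cos t)⁻¹) ?_).congr ?_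
  · have hc : Continuous fun t => q + p * cos t := by fun_prop
    exact fun t _ => (hc.continuousAt.inv₀ (add_mul_cos_pos hpq t).ne').continuousWithinAt
  · rw [uIoc_of_le hx.1.le]
    intro t ht
    have := (add_mul_cos_pos hpq t).ne'
    field_simp

lemma continuousAt_sin_rpow_mul_inv_mul_tan_half_rpow (hx : x ∈ Ioo 0 π) (p q : ℝ) :
    ContinuousAt (fun t => sin t ^ p * (sin t)⁻¹ * tan (t / 2) ^ q) x := by
  have hs := (sin_pos_of_pos_of_lt_pi hx.1 hx.2).ne'
  have htan : ContinuousAt (fun t => tan (t / 2)) x :=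
    (continuousAt_tan.2 (cos_half_pos ⟨by linarith [hx.1, pi_pos], hx.2⟩).ne').comp
      (f := fun t => t / 2) (by fun_prop)
  exact ((continuous_sin.continuousAt.rpow_const (Or.inl hs)).mul
    (continuous_sin.continuousAt.inv₀ hs)).mul
    (htan.rpow_const (Or.inl (tan_half_pos hx).ne'))

theorem tendsto_integral_div_sin_rpow_mul_tan_half_rpow (hpq : |p| < q) :
    Tendsto (fun x => (∫ t in 0..x, sin t ^ p * (sin t)⁻¹ * tan (t / 2) ^ q) /
      (sin x ^ p * tan (x / 2) ^ q)) (𝓝[>] 0) (𝓝 (1 / (q + p))) := by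
  have hint {x} (hx : x ∈ Ioo 0 π) :=
    intervalIntegrable_sin_rpow_mul_inv_mul_tan_half_rpow hpq hx
  have hF {x} (hx : x ∈ Ioo 0 π) :=
    integral_hasDerivAt_right (hint hx)
      (ContinuousAt.stronglyMeasurableAtFilter isOpen_Ioo
        (fun t ht => continuousAt_sin_rpow_mul_inv_mul_tan_half_rpow ht p q) x hx)
      (continuousAt_sin_rpow_mul_inv_mul_tan_half_rpow hx p q)
  have hF0 : Tendsto (fun x => ∫ t in 0..x, sin t ^ p * (sin t)⁻¹ * tan (t / 2) ^ q)
      (𝓝[>] 0) (𝓝 0) := by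
    have hπ2 : π / 2 ∈ Ioo 0 π := ⟨by linarith [pi_pos], by linarith [pi_pos]⟩
    have h := (continuousOn_primitive_interval' (hint hπ2) left_mem_uIcc 0 left_mem_uIcc).tendsto
    rw [integral_same, uIcc_of_le hπ2.1.le] at h
    rw [← nhdsWithin_Ioo_eq_nhdsGT hπ2.1]
    exact h.mono_left (nhdsWithin_mono _ Ioo_subset_Icc_self)
  have hW0 := tendsto_sin_rpow_mul_tan_half_rpow_zero (by linarith [neg_abs_le p] : 0 < p + q)
  have hratio : Tendsto (fun x => (q + p * cos x)⁻¹) (𝓝[>] 0) (𝓝 (1 / (q + p))) := by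
    have hc : Continuous fun x => q + p * cos x := by fun_prop
    have h := (hc.tendsto 0).inv₀ (add_mul_cos_pos hpq 0).ne'
    rw [cos_zero, mul_one, ← one_div] at h
    exact h.mono_left nhdsWithin_le_nhds
  refine (HasDerivAt.lhopital_zero_right_on_Ioo pi_pos (fun x hx => hF hx)
    (fun x hx => hasDerivAt_sin_rpow_mul_tan_half_rpow hx p q) ?_ hF0 hW0 ?_)
  · intro x hx
    have := sin_pos_of_pos_of_lt_pi hx.1 hx.2
    have := tan_half_pos hx
    have := add_mul_cos_pos hpq x
    positivity
  · refine hratio.congr' ?_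
    filter_upwards [Ioo_mem_nhdsGT pi_pos] with x hx
    have := (sin_pos_of_pos_of_lt_pi hx.1 hx.2).ne'
    have := (rpow_pos_of_pos (sin_pos_of_pos_of_lt_pi hx.1 hx.2) p).ne'
    have := (rpow_pos_of_pos (tan_half_pos hx) q).ne'
    have := (add_mul_cos_pos hpq x).ne'
    field_simp

end Real

/-- For `a, b > 0` with `2a + b < 2`, the function
`y₀(x) = (1/b)(sin x)^{a/b}(cot(x/2))^{1/b} ∫₀ˣ (sin t)^{-a/b}(sin t)⁻¹(tan(t/2))^{1/b} dt`
satisfies `lim_{x→0⁺} y₀(x) = 1/(1−a)`. -/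
theorem stmt6 (a b : ℝ) (ha : 0 < a) (hb : 0 < b) (hab : 2*a + b < 2) :
    Tendsto
      (fun x : ℝ => (1/b) * (Real.sin x) ^ (a/b) * (Real.cot (x/2)) ^ ((1:ℝ)/b) *
        ∫ t in (0:ℝ)..x, (Real.sin t) ^ (-(a/b)) * (Real.sin t)⁻¹ * (Real.tan (t/2)) ^ ((1:ℝ)/b))
      (nhdsWithin 0 (Ioo (0:ℝ) π)) (nhds (1/(1-a))) := by
  have habs : |-(a / b)| < 1 / b := by
    rw [abs_neg, abs_of_pos (div_pos ha hb)]
    exact div_lt_div_of_pos_right (by linarith) hb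
  have h := (Real.tendsto_integral_div_sin_rpow_mul_tan_half_rpow habs).const_mul (1 / b)
  rw [show 1 / b * (1 / (1 / b + -(a / b))) = 1 / (1 - a) by field_simp; ring] at h
  rw [nhdsWithin_Ioo_eq_nhdsGT Real.pi_pos]
  refine h.congr' ?_
  filter_upwards [Ioo_mem_nhdsGT Real.pi_pos] with x hx
  have hs := Real.sin_pos_of_pos_of_lt_pi hx.1 hx.2
  have ht := Real.tan_half_pos hx
  have hcot : Real.cot (x / 2) = (Real.tan (x / 2))⁻¹ := by
    rw [Real.cot_eq_cos_div_sin, Real.tan_eq_sin_div_cos, inv_div]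
  have hsin : Real.sin x ^ (a / b) = (Real.sin x ^ (-(a / b)))⁻¹ := by
    rw [Real.rpow_neg hs.le, inv_inv]
  rw [hcot, Real.inv_rpow ht.le, hsin]
  ring
end

section
/- Let a, b > 0 with 2a + b < 2 and y₀ as above on (0, π). Then lim_{x→π⁻} y₀(x) = 1/(1+a). -/
open MeasureTheory Set Filter Topology intervalIntegral
open scoped Real

open Real

/-! With `G(t) = weight a b t = (sin t)^(-a/b) (tan (t/2))^(1/b)` one has
`G' = G (1 - a cos t) / (b sin t)`, so the integrand of `y₀` is `G' · b / (1 - a cos t)` and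
`y₀(x) = (b G(x))⁻¹ ∫₀ˣ G' · b / (1 - a cos t)`. The half-angle form
`G(t) = 2^(-a/b) sin(t/2)^((1-a)/b) cos(t/2)^(-(1+a)/b)` shows `G(0⁺) = 0` (this is where `a < 1`
enters) and `G(π⁻) = ∞`. Hence `G(x) = ∫₀ˣ G'`, and as `G' ≥ 0` the quotient is a weighted mean
of `b / (1 - a cos t)` whose weight escapes to `t = π`; it tends to
`b / (1 - a cos π) = b / (1 + a)`. -/

theorem tendsto_integral_mul_div_integral {g P : ℝ → ℝ} {α β L : ℝ} (hαβ : α < β)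
    (hg : ∀ t ∈ Ioo α β, 0 ≤ g t)
    (hg_int : ∀ x ∈ Ioo α β, IntervalIntegrable g volume α x)
    (hgP_int : ∀ x ∈ Ioo α β, IntervalIntegrable (fun t ↦ g t * P t) volume α x)
    (hG : Tendsto (fun x ↦ ∫ t in α..x, g t) (𝓝[<] β) atTop)
    (hP : Tendsto P (𝓝[<] β) (𝓝 L)) :
    Tendsto (fun x ↦ (∫ t in α..x, g t * P t) / ∫ t in α..x, g t) (𝓝[<] β) (𝓝 L) := by
  rw [Metric.tendsto_nhds]
  intro ε hε
  obtain ⟨l, hlβ, hl⟩ := mem_nhdsLT_iff_exists_Ioo_subset.1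
    (hP (Metric.closedBall_mem_nhds L (half_pos hε)))
  set c := max α l
  set M := |∫ t in α..c, g t * (P t - L)|
  -- beyond `c` the deviation contributes at most `ε / 2 · ∫ g`; before `c` it is the constant `M`,
  -- which is negligible against `∫ g → ∞`
  filter_upwards [Ioo_mem_nhdsLT (max_lt hαβ hlβ), hG.eventually_gt_atTop (2 * M / ε)]
    with x hx hMx
  have hαc : α ≤ c := le_max_left α l
  have hαx : x ∈ Ioo α β := ⟨hαc.trans_lt hx.1, hx.2⟩
  have hI : 0 < ∫ t in α..x, g t := lt_of_le_of_lt (by positivity) hMx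
  have hdev_int : IntervalIntegrable (fun t ↦ g t * (P t - L)) volume α x := by
    simpa only [mul_sub] using (hgP_int x hαx).sub ((hg_int x hαx).mul_const L)
  have hc_mem : c ∈ uIcc α x := by
    rw [uIcc_of_le hαx.1.le]
    exact ⟨hαc, hx.1.le⟩
  have hdev : (∫ t in α..x, g t * P t) - (∫ t in α..x, g t) * L
      = (∫ t in α..c, g t * (P t - L)) + ∫ t in c..x, g t * (P t - L) := by
    rw [integral_add_adjacent_intervals (hdev_int.mono_set (uIcc_subset_uIcc_left hc_mem))
      (hdev_int.mono_set (uIcc_subset_uIcc_right hc_mem)),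
      ← intervalIntegral.integral_mul_const,
      ← integral_sub (hgP_int x hαx) ((hg_int x hαx).mul_const L)]
    simp only [mul_sub]
  have htail : |∫ t in c..x, g t * (P t - L)| ≤ ε / 2 * ∫ t in α..x, g t := by
    calc |∫ t in c..x, g t * (P t - L)| ≤ ∫ t in c..x, ε / 2 * g t := by
          rw [← Real.norm_eq_abs]
          refine norm_integral_le_of_norm_le hx.1.le (.of_forall fun t ht ↦ ?_)
            (((hg_int x hαx).mono_set (uIcc_subset_uIcc_right hc_mem)).const_mul _)
          have hPt : |P t - L| ≤ ε / 2 :=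
            hl ⟨(le_max_right α l).trans_lt ht.1, ht.2.trans_lt hx.2⟩
          have hgt : 0 ≤ g t := hg t ⟨hαc.trans_lt ht.1, ht.2.trans_lt hx.2⟩
          rw [norm_mul, Real.norm_of_nonneg hgt, Real.norm_eq_abs, mul_comm]
          exact mul_le_mul_of_nonneg_right hPt hgt
      _ ≤ ε / 2 * ∫ t in α..x, g t := by
          rw [intervalIntegral.integral_const_mul]
          gcongr
          exact integral_mono_interval hαc hx.1.le le_rfl
            (ae_restrict_of_forall_mem measurableSet_Ioc
              fun t ht ↦ hg t ⟨ht.1, ht.2.trans_lt hx.2⟩)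
            (hg_int x hαx)
  have hM : M < ε / 2 * ∫ t in α..x, g t := by
    rw [div_lt_iff₀' hε] at hMx
    linarith
  rw [Real.dist_eq, div_sub' hI.ne', abs_div, abs_of_pos hI, div_lt_iff₀ hI, hdev]
  calc _ ≤ M + |∫ t in c..x, g t * (P t - L)| := abs_add_le _ _
    _ < ε * ∫ t in α..x, g t := by linarith

noncomputable def weight (a b t : ℝ) : ℝ := sin t ^ (-(a / b)) * tan (t / 2) ^ (1 / b)

noncomputable def weightDeriv (a b t : ℝ) : ℝ := weight a b t * ((1 - a * cos t) / (b * sin t))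

section Weight

variable {a b : ℝ}

lemma sin_eq_two_mul_sin_half_mul_cos_half (t : ℝ) : sin t = 2 * sin (t / 2) * cos (t / 2) := by
  rw [← sin_two_mul, two_mul, add_halves]

lemma weight_zero (hb : b ≠ 0) : weight a b 0 = 0 := by
  simp [weight, hb]

lemma weight_pos {t : ℝ} (ht : t ∈ Ioo 0 π) : 0 < weight a b t := by
  have htan : 0 < tan (t / 2) :=
    tan_pos_of_pos_of_lt_pi_div_two (by linarith [ht.1]) (by linarith [ht.2])
  exact mul_pos (rpow_pos_of_pos (sin_pos_of_pos_of_lt_pi ht.1 ht.2) _) (rpow_pos_of_pos htan _)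

lemma weight_eq_half_angle {t : ℝ} (ht : t ∈ Ioo 0 π) :
    weight a b t =
      2 ^ (-(a / b)) * sin (t / 2) ^ ((1 - a) / b) * cos (t / 2) ^ (-((1 + a) / b)) := by
  have hs : 0 < sin (t / 2) :=
    sin_pos_of_pos_of_lt_pi (by linarith [ht.1]) (by linarith [ht.2, pi_pos])
  have hc : 0 < cos (t / 2) :=
    cos_pos_of_mem_Ioo ⟨by linarith [ht.1, pi_pos], by linarith [ht.2]⟩
  rw [weight, sin_eq_two_mul_sin_half_mul_cos_half, tan_eq_sin_div_cos,
    mul_rpow (by positivity) hc.le, mul_rpow (by norm_num) hs.le, div_rpow hs.le hc.le,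
    show (1 - a) / b = -(a / b) + 1 / b by ring, show -((1 + a) / b) = -(a / b) + -(1 / b) by ring,
    rpow_add hs, rpow_add hc, rpow_neg hc.le (1 / b)]
  ring

lemma hasDerivAt_weight (hb : b ≠ 0) {t : ℝ} (ht : t ∈ Ioo 0 π) :
    HasDerivAt (weight a b) (weightDeriv a b t) t := by
  have hsin : 0 < sin t := sin_pos_of_pos_of_lt_pi ht.1 ht.2
  have hc : 0 < cos (t / 2) := cos_pos_of_mem_Ioo ⟨by linarith [ht.1, pi_pos], by linarith [ht.2]⟩
  have htan : 0 < tan (t / 2) :=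
    tan_pos_of_pos_of_lt_pi_div_two (by linarith [ht.1]) (by linarith [ht.2])
  have hsin_rpow := (hasDerivAt_sin t).rpow_const (p := -(a / b)) (.inl hsin.ne')
  have htan_half : HasDerivAt (fun x ↦ tan (x / 2)) (1 / cos (t / 2) ^ 2 * (1 / 2)) t := by
    simpa [Function.comp_def] using (hasDerivAt_tan hc.ne').comp t ((hasDerivAt_id t).div_const 2)
  refine (hsin_rpow.mul (htan_half.rpow_const (p := 1 / b) (.inl htan.ne'))).congr_deriv ?_
  have htan_eq : tan (t / 2) = sin t / (2 * cos (t / 2) ^ 2) := by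
    rw [tan_eq_sin_div_cos, sin_eq_two_mul_sin_half_mul_cos_half t]
    field_simp
  rw [rpow_sub_one hsin.ne', rpow_sub_one htan.ne', weightDeriv, weight, htan_eq]
  field_simp
  ring

lemma tendsto_weight_nhdsGT_zero (ha : a < 1) (hb : 0 < b) :
    Tendsto (weight a b) (𝓝[>] 0) (𝓝 0) := by
  have hhalf : Continuous fun t : ℝ ↦ t / 2 := continuous_id.div_const 2
  have hcont : ContinuousAt (fun t ↦
      2 ^ (-(a / b)) * sin (t / 2) ^ ((1 - a) / b) * cos (t / 2) ^ (-((1 + a) / b))) 0 :=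
    (continuousAt_const.mul ((continuous_sin.comp hhalf).continuousAt.rpow_const
      (.inr (div_pos (by linarith) hb).le))).mul
      ((continuous_cos.comp hhalf).continuousAt.rpow_const (.inl (by simp)))
  convert (hcont.tendsto.mono_left nhdsWithin_le_nhds).congr' ?_ using 2
  · simp [zero_rpow (div_pos (sub_pos.2 ha) hb).ne']
  filter_upwards [Ioo_mem_nhdsGT pi_pos] with t ht
  exact (weight_eq_half_angle ht).symm

lemma tendsto_weight_nhdsLT_pi (ha : -1 < a) (hb : 0 < b) :
    Tendsto (weight a b) (𝓝[<] π) atTop := by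
  have hhalf : Continuous fun t : ℝ ↦ t / 2 := continuous_id.div_const 2
  have hsin : Tendsto (fun t ↦ 2 ^ (-(a / b)) * sin (t / 2) ^ ((1 - a) / b)) (𝓝[<] π)
      (𝓝 (2 ^ (-(a / b)))) := by
    have := ((continuous_sin.comp hhalf).continuousAt (x := π)).rpow_const
      (p := (1 - a) / b) (.inl (by simp))
    simpa [Function.comp_def] using (this.tendsto.mono_left nhdsWithin_le_nhds).const_mul _
  have hcos : Tendsto (fun t ↦ cos (t / 2)) (𝓝[<] π) (𝓝[>] 0) := by
    refine tendsto_nhdsWithin_of_tendsto_nhds_of_eventually_within _ ?_ ?_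
    · simpa [Function.comp_def] using
        ((continuous_cos.comp hhalf).tendsto π).mono_left nhdsWithin_le_nhds
    · filter_upwards [Ioo_mem_nhdsLT pi_pos] with t ht
      exact cos_pos_of_mem_Ioo ⟨by linarith [ht.1, pi_pos], by linarith [ht.2]⟩
  have hrpow := (tendsto_rpow_neg_nhdsGT_zero (y := -((1 + a) / b))
    (neg_neg_of_pos (div_pos (by linarith) hb))).comp hcos
  refine (hsin.pos_mul_atTop (by positivity) hrpow).congr' ?_
  filter_upwards [Ioo_mem_nhdsLT pi_pos] with t ht
  exact (weight_eq_half_angle ht).symm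

lemma continuousOn_weight (ha : a < 1) (hb : 0 < b) : ContinuousOn (weight a b) (Ico 0 π) := by
  intro t ht
  rcases ht.1.eq_or_lt with rfl | ht0
  · have h0 : ContinuousWithinAt (weight a b) (Ioi 0) 0 := by
      rw [ContinuousWithinAt, weight_zero hb.ne']
      exact tendsto_weight_nhdsGT_zero ha hb
    exact (continuousWithinAt_Ioi_iff_Ici.1 h0).mono fun s hs ↦ hs.1
  · exact (hasDerivAt_weight hb.ne' ⟨ht0, ht.2⟩).continuousAt.continuousWithinAt

lemma one_sub_mul_cos_pos (ha : |a| < 1) (t : ℝ) : 0 < 1 - a * cos t := by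
  have : a * cos t ≤ |a| := calc
    a * cos t ≤ |a * cos t| := le_abs_self _
    _ ≤ |a| := by rw [abs_mul]; exact mul_le_of_le_one_right (abs_nonneg a) (abs_cos_le_one t)
  linarith

lemma weightDeriv_nonneg (ha : |a| < 1) (hb : 0 < b) {t : ℝ} (ht : t ∈ Ioo 0 π) :
    0 ≤ weightDeriv a b t := by
  have hsin := sin_pos_of_pos_of_lt_pi ht.1 ht.2
  have hcos := one_sub_mul_cos_pos ha t
  have hweight := weight_pos (a := a) (b := b) ht
  unfold weightDeriv
  positivity

lemma intervalIntegrable_weightDeriv (ha : |a| < 1) (hb : 0 < b) {x : ℝ} (hx : x ∈ Ioo 0 π) :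
    IntervalIntegrable (weightDeriv a b) volume 0 x := by
  rw [intervalIntegrable_iff_integrableOn_Ioc_of_le hx.1.le]
  exact integrableOn_deriv_of_nonneg
    ((continuousOn_weight (abs_lt.1 ha).2 hb).mono (Icc_subset_Ico_right hx.2))
    (fun t ht ↦ hasDerivAt_weight hb.ne' ⟨ht.1, ht.2.trans hx.2⟩)
    (fun t ht ↦ weightDeriv_nonneg ha hb ⟨ht.1, ht.2.trans hx.2⟩)

lemma integral_weightDeriv (ha : |a| < 1) (hb : 0 < b) {x : ℝ} (hx : x ∈ Ioo 0 π) :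
    ∫ t in 0..x, weightDeriv a b t = weight a b x := by
  rw [integral_eq_sub_of_hasDeriv_right_of_le hx.1.le
    ((continuousOn_weight (abs_lt.1 ha).2 hb).mono (Icc_subset_Ico_right hx.2))
    (fun t ht ↦ (hasDerivAt_weight hb.ne' ⟨ht.1, ht.2.trans hx.2⟩).hasDerivWithinAt)
    (intervalIntegrable_weightDeriv ha hb hx), weight_zero hb.ne', sub_zero]

lemma sin_rpow_mul_tan_rpow_eq_weightDeriv_mul (ha : |a| < 1) (hb : b ≠ 0) {t : ℝ}
    (ht : t ∈ Ioo 0 π) :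
    sin t ^ (-(a / b) - 1) * tan (t / 2) ^ (1 / b) = weightDeriv a b t * (b / (1 - a * cos t)) := by
  have hsin := sin_pos_of_pos_of_lt_pi ht.1 ht.2
  have hcos := one_sub_mul_cos_pos ha t
  rw [weightDeriv, weight, rpow_sub_one hsin.ne']
  field_simp

lemma sin_rpow_mul_cot_rpow {x : ℝ} (hx : x ∈ Ioo 0 π) :
    sin x ^ (a / b) * cot (x / 2) ^ (1 / b) = (weight a b x)⁻¹ := by
  have hsin := sin_pos_of_pos_of_lt_pi hx.1 hx.2
  have htan : 0 < tan (x / 2) :=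
    tan_pos_of_pos_of_lt_pi_div_two (by linarith [hx.1]) (by linarith [hx.2])
  rw [weight, mul_inv, ← rpow_neg hsin.le, neg_neg, cot_eq_cos_div_sin, ← inv_div (sin (x / 2)),
    ← tan_eq_sin_div_cos, inv_rpow htan.le]

end Weight

/-- For `a, b > 0` with `2a + b < 2`, the function
`y₀(x) = (1/b)(sin x)^{a/b}(cot(x/2))^{1/b} ∫₀ˣ (sin t)^{-a/b-1}(tan(t/2))^{1/b} dt`
satisfies `lim_{x→π⁻} y₀(x) = 1/(1+a)`. -/
theorem stmt7 (a b : ℝ) (ha : 0 < a) (hb : 0 < b) (hab : 2*a + b < 2) :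
    Tendsto
      (fun x : ℝ => (1/b) * (Real.sin x) ^ (a/b) * (Real.cot (x/2)) ^ ((1:ℝ)/b) *
        ∫ t in (0:ℝ)..x, (Real.sin t) ^ (-(a/b) - 1) * (Real.tan (t/2)) ^ ((1:ℝ)/b))
      (nhdsWithin π (Ioo (0:ℝ) π)) (nhds (1/(1+a))) := by
  have ha1 : |a| < 1 := abs_lt.2 ⟨by linarith, by linarith⟩
  have hP : Continuous fun t ↦ b / (1 - a * cos t) :=
    continuous_const.div (continuous_const.sub (continuous_const.mul continuous_cos))
      fun t ↦ (one_sub_mul_cos_pos ha1 t).ne'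
  have hG : Tendsto (fun x ↦ ∫ t in 0..x, weightDeriv a b t) (𝓝[<] π) atTop :=
    (tendsto_weight_nhdsLT_pi (by linarith) hb).congr' <|
      eventually_of_mem (Ioo_mem_nhdsLT pi_pos) fun x hx ↦ (integral_weightDeriv ha1 hb hx).symm
  have hratio := tendsto_integral_mul_div_integral pi_pos (fun t ↦ weightDeriv_nonneg ha1 hb)
    (fun x ↦ intervalIntegrable_weightDeriv ha1 hb)
    (fun x hx ↦ (intervalIntegrable_weightDeriv ha1 hb hx).mul_continuousOn hP.continuousOn) hG
    ((hP.tendsto π).mono_left nhdsWithin_le_nhds)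
  have hlim : 1 / (1 + a) = 1 / b * (b / (1 - a * cos π)) := by
    rw [cos_pi]
    field_simp [(by linarith : 1 + a ≠ 0)]
    ring
  rw [nhdsWithin_Ioo_eq_nhdsLT pi_pos, hlim]
  refine (hratio.const_mul (1 / b)).congr' ?_
  filter_upwards [Ioo_mem_nhdsLT pi_pos] with x hx
  have hintegrand : ∫ t in 0..x, sin t ^ (-(a / b) - 1) * tan (t / 2) ^ (1 / b)
      = ∫ t in 0..x, weightDeriv a b t * (b / (1 - a * cos t)) :=
    integral_congr_ae <| .of_forall fun t ht ↦ by
      rw [uIoc_of_le hx.1.le] at ht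
      exact sin_rpow_mul_tan_rpow_eq_weightDeriv_mul ha1 hb.ne' ⟨ht.1, ht.2.trans_lt hx.2⟩
  rw [integral_weightDeriv ha1 hb hx, hintegrand, mul_assoc (1 / b), sin_rpow_mul_cot_rpow hx]
  ring
end

section
/- For a, b > 0 with 2a + b < 2, the homogeneous solution h(x) = (sin x)^{a/b}·(cot(x/2))^{1/b} on (0, π) is not square integrable near 0; more precisely, h(x) ≍ 2^{1/b}·x^{(a−1)/b} as x → 0⁺ and (a−1)/b < −1/2. -/
/-!
Near `0` we have `sin x ~ x` and `x · cot (x/2) → 2`. Exactly: on `(0, π)`,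
`(sin x)^α (cot (x/2))^β x^(β-α) = (sinc x)^α (2 cos (x/2) / sinc (x/2))^β`, and the right-hand
side is continuous at `0` with value `2^β`. So `h x ≥ c · x^((a-1)/b)` near `0` for some `c > 0`,
and `|h|²` is not integrable there because `2(a-1)/b < -1`.
-/

open MeasureTheory Set Filter Topology
open scoped Real ENNReal

theorem sin_rpow_mul_cot_rpow_mul_rpow_eq_sinc {x : ℝ} (hx : x ∈ Ioo 0 π) (α β : ℝ) :
    Real.sin x ^ α * Real.cot (x / 2) ^ β * x ^ (β - α) =
      Real.sinc x ^ α * (2 * Real.cos (x / 2) / Real.sinc (x / 2)) ^ β := by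
  obtain ⟨hx0, hxπ⟩ := hx
  have hsin : 0 < Real.sin (x / 2) := Real.sin_pos_of_pos_of_lt_pi (by linarith) (by linarith)
  have hcos : 0 < Real.cos (x / 2) := Real.cos_pos_of_mem_Ioo ⟨by linarith, by linarith⟩
  have hxcot : 2 * Real.cos (x / 2) / Real.sinc (x / 2) = x * Real.cot (x / 2) := by
    rw [Real.sinc_of_ne_zero (by positivity), Real.cot_eq_cos_div_sin]
    field_simp
  have hxα : 0 < x ^ α := Real.rpow_pos_of_pos hx0 α
  rw [hxcot, Real.sinc_of_ne_zero hx0.ne', Real.div_rpow (Real.sin_pos_of_pos_of_lt_pi hx0 hxπ).le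
    hx0.le, Real.mul_rpow hx0.le (by rw [Real.cot_eq_cos_div_sin]; positivity),
    Real.rpow_sub hx0]
  field_simp

theorem tendsto_sin_rpow_mul_cot_rpow_mul_rpow (α β : ℝ) :
    Tendsto (fun x => Real.sin x ^ α * Real.cot (x / 2) ^ β * x ^ (β - α)) (𝓝[>] 0)
      (𝓝 (2 ^ β)) := by
  have hhalf : ContinuousAt (fun x : ℝ => x / 2) 0 := (continuous_id.div_const 2).continuousAt
  have hcont : ContinuousAt
      (fun x => Real.sinc x ^ α * (2 * Real.cos (x / 2) / Real.sinc (x / 2)) ^ β) 0 := by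
    refine (Real.continuous_sinc.continuousAt.rpow_const (by simp)).mul
      (ContinuousAt.rpow_const ?_ (by simp))
    exact (continuousAt_const.mul (Real.continuous_cos.continuousAt.comp hhalf)).div
      (Real.continuous_sinc.continuousAt.comp hhalf) (by simp)
  have hlim := hcont.tendsto.mono_left (nhdsWithin_le_nhds (s := Ioi 0))
  simp only [Real.sinc_zero, zero_div, Real.cos_zero, Real.one_rpow, one_mul, mul_one,
    div_one] at hlim
  refine hlim.congr' ?_
  filter_upwards [Ioo_mem_nhdsGT Real.pi_pos] with x hx
  exact (sin_rpow_mul_cot_rpow_mul_rpow_eq_sinc hx α β).symm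

theorem not_integrableOn_Ioo_of_eventually_rpow_le {g : ℝ → ℝ} {c s t : ℝ} (ht : 0 < t)
    (hc : 0 < c) (hs : s ≤ -1) (hg : ∀ᶠ x in 𝓝[>] 0, c * x ^ s ≤ g x) :
    ¬ IntegrableOn g (Ioo 0 t) := by
  intro hint
  obtain ⟨u, hu, hgu⟩ := mem_nhdsGT_iff_exists_Ioo_subset.mp hg
  set δ := min u t
  have hδ : 0 < δ := lt_min hu ht
  have hpow : IntegrableOn (fun x => c * x ^ s) (Ioo 0 δ) := by
    refine (hint.mono_set (Ioo_subset_Ioo_right (min_le_right u t))).mono'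
      (by fun_prop) ?_
    rw [ae_restrict_iff' measurableSet_Ioo]
    filter_upwards with x hx
    rw [Real.norm_of_nonneg (by have := Real.rpow_pos_of_pos hx.1 s; positivity)]
    exact hgu ⟨hx.1, hx.2.trans_le (min_le_left u t)⟩
  rw [IntegrableOn, integrable_const_mul_iff hc.ne'.isUnit, ← IntegrableOn,
    intervalIntegral.integrableOn_Ioo_rpow_iff hδ] at hpow
  linarith

theorem not_memLp_Ioo_of_tendsto_mul_rpow {f : ℝ → ℝ} {r L t : ℝ} {p : ℝ≥0∞} (ht : 0 < t)
    (hL : 0 < L) (hp0 : p ≠ 0) (hp : p ≠ ∞) (hr : 1 ≤ r * p.toReal)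
    (hf : Tendsto (fun x => f x * x ^ r) (𝓝[>] 0) (𝓝 L)) :
    ¬ MemLp f p (volume.restrict (Ioo 0 t)) := by
  intro hmem
  refine not_integrableOn_Ioo_of_eventually_rpow_le ht (c := (L / 2) ^ p.toReal)
    (s := -(r * p.toReal)) (by positivity) (by linarith) ?_
    (hmem.integrable_norm_rpow hp0 hp)
  filter_upwards [hf.eventually (eventually_gt_nhds (half_lt_self hL)), self_mem_nhdsWithin]
    with x hfx (hx : 0 < x)
  have hxr : 0 < x ^ r := Real.rpow_pos_of_pos hx r
  have hlow : L / 2 * x ^ (-r) ≤ ‖f x‖ := by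
    rw [Real.rpow_neg hx.le, ← div_eq_mul_inv, div_le_iff₀ hxr]
    exact hfx.le.trans (mul_le_mul_of_nonneg_right (Real.le_norm_self _) hxr.le)
  calc (L / 2) ^ p.toReal * x ^ (-(r * p.toReal))
      = (L / 2 * x ^ (-r)) ^ p.toReal := by
        rw [Real.mul_rpow (by positivity) (by positivity), ← Real.rpow_mul hx.le, neg_mul]
    _ ≤ ‖f x‖ ^ p.toReal := by gcongr

theorem stmt9_general (a b : ℝ) (hb : 0 < b) (hab : 2*a + b < 2) :
    ¬ MemLp (fun x : ℝ => (Real.sin x) ^ (a/b) * (Real.cot (x/2)) ^ ((1:ℝ)/b)) 2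
        (volume.restrict (Ioo (0:ℝ) π)) ∧
    Tendsto
      (fun x : ℝ => ((Real.sin x) ^ (a/b) * (Real.cot (x/2)) ^ ((1:ℝ)/b)) * x ^ ((1-a)/b))
      (nhdsWithin 0 (Ioo (0:ℝ) π)) (nhds ((2:ℝ) ^ ((1:ℝ)/b))) ∧
    (a - 1)/b < -(1/2) := by
  have hexp : (a - 1)/b < -(1/2) := by
    rw [div_lt_iff₀ hb]
    linarith
  have hlim := tendsto_sin_rpow_mul_cot_rpow_mul_rpow (a/b) (1/b)
  rw [← sub_div] at hlim
  rw [nhdsWithin_Ioo_eq_nhdsGT Real.pi_pos]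
  refine ⟨not_memLp_Ioo_of_tendsto_mul_rpow Real.pi_pos (by positivity) two_ne_zero
    ENNReal.ofNat_ne_top ?_ hlim, hlim, hexp⟩
  rw [ENNReal.toReal_ofNat, show (1 - a) / b = -((a - 1) / b) by ring]
  linarith

/-- For `a, b > 0` with `2a + b < 2`, the homogeneous solution
`h(x) = (sin x)^{a/b}·(cot(x/2))^{1/b}` on `(0, π)` is not square integrable near `0`;
more precisely `h(x)·x^{(1−a)/b} → 2^{1/b}` as `x → 0⁺` and `(a−1)/b < −1/2`. -/
theorem stmt9 (a b : ℝ) (ha : 0 < a) (hb : 0 < b) (hab : 2*a + b < 2) :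
    ¬ MemLp (fun x : ℝ => (Real.sin x) ^ (a/b) * (Real.cot (x/2)) ^ ((1:ℝ)/b)) 2
        (volume.restrict (Ioo (0:ℝ) π)) ∧
    Tendsto
      (fun x : ℝ => ((Real.sin x) ^ (a/b) * (Real.cot (x/2)) ^ ((1:ℝ)/b)) * x ^ ((1-a)/b))
      (nhdsWithin 0 (Ioo (0:ℝ) π)) (nhds ((2:ℝ) ^ ((1:ℝ)/b))) ∧
    (a - 1)/b < -(1/2) :=
  stmt9_general a b hb hab
end

section
/- Let a, b > 0 with 2a + b < 2 and let y₀ be the even extension to (−π, π) of the function y₀(x) = (1/b)(sin x)^{a/b}(cot(x/2))^{1/b} ∫₀ˣ (sin t)^{-a/b-1}(tan(t/2))^{1/b} dt, x ∈ (0, π). Then y₀ extends to a continuous function on [−π, π] with y₀(−π) = y₀(π) = 1/(1+a) and y₀(0) = 1/(1−a); in particular y₀ satisfies periodic boundary conditions. -/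
open MeasureTheory Set intervalIntegral
open scoped Real

/-!
On `(0, π)` we have `y₀ = F / D`, where `F x = ∫₀ˣ f` is the integral in its
formula and `D x = b (sin x)^{-a/b} (tan (x/2))^{1/b}`, which equals
`b (1 - cos x)^{(1-a)/(2b)} (1 + cos x)^{-(1+a)/(2b)}`.
A direct computation gives `D' = f · (1 - a cos x)`, so `F' / D' = 1 / (1 - a cos x)`.
At `0` both `F` and `D` vanish, while at `π` the denominator `D` tends to `+∞`;
l'Hôpital's rule, in its `0/0` and `·/∞` forms, then gives the limits `1 / (1 - a)` and
`1 / (1 + a)`.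
-/

open Filter Topology Real

theorem Real.tan_half_eq_one_sub_cos_div_sin (x : ℝ) : tan (x / 2) = (1 - cos x) / sin x := by
  obtain ⟨y, rfl⟩ : ∃ y, x = 2 * y := ⟨x / 2, by ring⟩
  rw [mul_div_cancel_left₀ y two_ne_zero, tan_eq_sin_div_cos, sin_two_mul,
    cos_two_mul_eq_one_sub]
  rcases eq_or_ne (sin y) 0 with h | h
  · simp [h]
  · rw [sub_sub_cancel, sq, ← mul_assoc, mul_div_mul_left _ _ (mul_ne_zero two_ne_zero h)]

theorem Real.sin_rpow_eq_one_sub_cos_rpow_mul_one_add_cos_rpow {x : ℝ} (hx : 0 ≤ sin x)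
    (r : ℝ) : sin x ^ r = (1 - cos x) ^ (r / 2) * (1 + cos x) ^ (r / 2) := by
  rw [← mul_rpow (by linarith [cos_le_one x]) (by linarith [neg_one_le_cos x])]
  calc sin x ^ r = (sin x ^ (2 : ℝ)) ^ (r / 2) := by rw [← rpow_mul hx]; ring_nf
    _ = _ := by rw [rpow_two, sin_sq]; ring_nf

theorem continuousOn_Icc_of_continuousOn_Ioo {α β : Type*} [LinearOrder α] [TopologicalSpace α]
    [OrderTopology α] [TopologicalSpace β] {f : α → β} {a b : α} (hab : a < b)
    (hf : ContinuousOn f (Ioo a b)) (ha : Tendsto f (𝓝[>] a) (𝓝 (f a)))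
    (hb : Tendsto f (𝓝[<] b) (𝓝 (f b))) : ContinuousOn f (Icc a b) := by
  intro x hx
  rcases hx.1.eq_or_lt with rfl | hax
  · exact (continuousWithinAt_Icc_iff_Ici hab).2 (continuousWithinAt_Ioi_iff_Ici.1 ha)
  rcases hx.2.eq_or_lt with rfl | hxb
  · exact (continuousWithinAt_Icc_iff_Iic hab).2 (continuousWithinAt_Iio_iff_Iic.1 hb)
  exact (hf.continuousAt (Ioo_mem_nhds hax hxb)).continuousWithinAt

theorem HasDerivAt.lhopital_atTop_left_on_Ioo {a b l : ℝ} {f f' g g' : ℝ → ℝ} (hab : a < b)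
    (hff' : ∀ x ∈ Ioo a b, HasDerivAt f (f' x) x)
    (hgg' : ∀ x ∈ Ioo a b, HasDerivAt g (g' x) x)
    (hg' : ∀ x ∈ Ioo a b, 0 < g' x) (hg : Tendsto g (𝓝[<] b) atTop)
    (hdiv : Tendsto (fun x => f' x / g' x) (𝓝[<] b) (𝓝 l)) :
    Tendsto (fun x => f x / g x) (𝓝[<] b) (𝓝 l) := by
  rw [Metric.tendsto_nhds]
  intro ε hε
  obtain ⟨c, hc, hcb⟩ := (mem_nhdsLT_iff_exists_mem_Ico_Ioo_subset hab).1
    (Metric.tendsto_nhds.1 hdiv (ε / 2) (half_pos hε))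
  have hca : Ioo c b ⊆ Ioo a b := Ioo_subset_Ioo_left hc.1
  set u := fun y => f y - l * g y
  have hu : ∀ y ∈ Ioo c b, HasDerivAt u (f' y - l * g' y) y := fun y hy =>
    (hff' y (hca hy)).sub ((hgg' y (hca hy)).const_mul l)
  have hu' : ∀ y ∈ Ioo c b, ‖f' y - l * g' y‖ ≤ ε / 2 * g' y := by
    intro y hy
    have hpos := hg' y (hca hy)
    have hy' := hcb hy
    rw [mem_ofPred_eq, Real.dist_eq, div_sub' hpos.ne', abs_div, abs_of_pos hpos,
      div_lt_iff₀ hpos] at hy'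
    rw [Real.norm_eq_abs, mul_comm l]
    exact hy'.le
  obtain ⟨d, hd⟩ : (Ioo c b).Nonempty := nonempty_Ioo.2 hc.2
  have hfence : ∀ x ∈ Ioo d b, |u x - u d| ≤ ε / 2 * (g x - g d) := by
    intro x hx
    have hIcc : Icc d x ⊆ Ioo c b := Icc_subset_Ioo hd.1 hx.2
    have hIco : Ico d x ⊆ Ioo c b := Ico_subset_Icc_self.trans hIcc
    refine image_norm_le_of_norm_deriv_right_le_deriv_boundary' (f := fun y => u y - u d)
      (B := fun y => ε / 2 * (g y - g d)) ?_ ?_ (by simp) ?_ ?_ (fun y hy => hu' y (hIco hy))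
      ⟨hx.1.le, le_rfl⟩
    · exact fun y hy => ((hu y (hIcc hy)).sub_const _).continuousAt.continuousWithinAt
    · exact fun y hy => ((hu y (hIco hy)).sub_const _).hasDerivWithinAt
    · exact fun y hy =>
        (((hgg' y (hca (hIcc hy))).sub_const _).const_mul _).continuousAt.continuousWithinAt
    · exact fun y hy => (((hgg' y (hca (hIco hy))).sub_const _).const_mul _).hasDerivWithinAt
  filter_upwards [hg.eventually (eventually_gt_atTop 0),
    (hg.const_mul_atTop (half_pos hε)).eventually (eventually_gt_atTop (|u d| - ε / 2 * g d)),
    Ioo_mem_nhdsLT hd.2] with x hgx hgxε hx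
  rw [Real.dist_eq, div_sub' hgx.ne', abs_div, abs_of_pos hgx, div_lt_iff₀ hgx, mul_comm (g x) l]
  change |u x| < ε * g x
  linarith [hfence x hx, abs_sub_abs_le_abs_sub (u x) (u d)]

namespace PeriodicSolution

noncomputable def integrand (a b t : ℝ) : ℝ :=
  sin t ^ (-(a / b) - 1) * tan (t / 2) ^ ((1 : ℝ) / b)

noncomputable def primitive (a b x : ℝ) : ℝ :=
  ∫ t in (0 : ℝ)..x, integrand a b t

noncomputable def denom (a b x : ℝ) : ℝ :=
  b * ((1 - cos x) ^ ((1 - a) / (2 * b)) * (1 + cos x) ^ (-((1 + a) / (2 * b))))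

variable {a b x : ℝ}

lemma one_sub_cos_pos (hx : x ∈ Ioo 0 π) : 0 < 1 - cos x := by
  have := cos_lt_cos_of_nonneg_of_le_pi le_rfl hx.2.le hx.1
  rw [cos_zero] at this; linarith

lemma one_add_cos_pos (hx : x ∈ Ioo 0 π) : 0 < 1 + cos x := by
  have := cos_lt_cos_of_nonneg_of_le_pi hx.1.le le_rfl hx.2
  rw [cos_pi] at this; linarith

lemma denom_eq (hb : b ≠ 0) (hx : x ∈ Ioo 0 π) :
    denom a b x = b * (sin x ^ (-(a / b)) * tan (x / 2) ^ ((1 : ℝ) / b)) := by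
  have hs := sin_pos_of_pos_of_lt_pi hx.1 hx.2
  have hu := one_sub_cos_pos hx
  have hv := one_add_cos_pos hx
  rw [tan_half_eq_one_sub_cos_div_sin, div_rpow hu.le hs.le,
    sin_rpow_eq_one_sub_cos_rpow_mul_one_add_cos_rpow hs.le,
    sin_rpow_eq_one_sub_cos_rpow_mul_one_add_cos_rpow hs.le, denom,
    show (1 - a) / (2 * b) = -(a / b) / 2 + 1 / b - 1 / b / 2 by field_simp; ring,
    show -((1 + a) / (2 * b)) = -(a / b) / 2 - 1 / b / 2 by field_simp; ring,
    rpow_sub hu, rpow_add hu, rpow_sub hv]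
  field_simp

lemma integrand_eq (hb : b ≠ 0) (hx : x ∈ Ioo 0 π) :
    integrand a b x = denom a b x / (b * sin x) := by
  have hs := sin_pos_of_pos_of_lt_pi hx.1 hx.2
  rw [denom_eq hb hx, integrand, rpow_sub_one hs.ne']
  field_simp

lemma primitive_div_denom_eq (hb : b ≠ 0) (hx : x ∈ Ioo 0 π) :
    primitive a b x / denom a b x =
      1 / b * sin x ^ (a / b) * cot (x / 2) ^ ((1 : ℝ) / b) * primitive a b x := by
  have hs := sin_pos_of_pos_of_lt_pi hx.1 hx.2
  have ht : 0 < tan (x / 2) := tan_pos_of_pos_of_lt_pi_div_two (by linarith [hx.1])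
    (by linarith [hx.2])
  rw [denom_eq hb hx, cot_eq_cos_div_sin, ← inv_div (sin (x / 2)), ← tan_eq_sin_div_cos,
    inv_rpow ht.le, rpow_neg hs.le]
  field_simp

lemma hasDerivAt_denom (hb : b ≠ 0) (hx : x ∈ Ioo 0 π) :
    HasDerivAt (denom a b) (integrand a b x * (1 - a * cos x)) x := by
  have hs := sin_pos_of_pos_of_lt_pi hx.1 hx.2
  have hu := one_sub_cos_pos hx
  have hv := one_add_cos_pos hx
  have h1 := ((hasDerivAt_cos x).const_sub 1).rpow_const (p := (1 - a) / (2 * b))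
    (Or.inl hu.ne')
  have h2 := ((hasDerivAt_cos x).const_add 1).rpow_const (p := -((1 + a) / (2 * b)))
    (Or.inl hv.ne')
  refine ((h1.mul h2).const_mul b).congr_deriv ?_
  rw [integrand_eq hb hx, denom, rpow_sub_one hu.ne', rpow_sub_one hv.ne']
  field_simp
  linear_combination (2 - 2 * a * cos x) * sin_sq_add_cos_sq x

lemma denom_pos (hb : 0 < b) (hx : x ∈ Ioo 0 π) : 0 < denom a b x :=
  mul_pos hb (mul_pos (rpow_pos_of_pos (one_sub_cos_pos hx) _)
    (rpow_pos_of_pos (one_add_cos_pos hx) _))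

lemma integrand_pos (hb : 0 < b) (hx : x ∈ Ioo 0 π) : 0 < integrand a b x := by
  rw [integrand_eq hb.ne' hx]
  exact div_pos (denom_pos hb hx) (mul_pos hb (sin_pos_of_pos_of_lt_pi hx.1 hx.2))

lemma continuousOn_integrand (hb : b ≠ 0) : ContinuousOn (integrand a b) (Ioo 0 π) := by
  refine ContinuousOn.congr (f := fun x => denom a b x / (b * sin x)) ?_
    (fun x hx => integrand_eq hb hx)
  refine fun x hx => ContinuousAt.continuousWithinAt ?_
  exact (hasDerivAt_denom hb hx).continuousAt.div (by fun_prop)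
    (mul_ne_zero hb (sin_pos_of_pos_of_lt_pi hx.1 hx.2).ne')

lemma continuousOn_denom (ha : a < 1) (hb : 0 < b) : ContinuousOn (denom a b) (Ico 0 π) := by
  refine ContinuousOn.const_smul (ContinuousOn.mul ?_ ?_) b
  · exact ContinuousOn.rpow_const (by fun_prop) fun x _ =>
      Or.inr (div_pos (by linarith) (by positivity)).le
  · refine ContinuousOn.rpow_const (by fun_prop) fun x hx => Or.inl ?_
    rcases hx.1.eq_or_lt with rfl | h
    · norm_num
    · exact (one_add_cos_pos ⟨h, hx.2⟩).ne'

lemma denom_zero (ha : a < 1) (hb : 0 < b) : denom a b 0 = 0 := by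
  simp [denom, zero_rpow (div_pos (sub_pos.2 ha) (mul_pos two_pos hb)).ne']

lemma tendsto_denom_pi (ha : -1 < a) (hb : 0 < b) : Tendsto (denom a b) (𝓝[<] π) atTop := by
  have hu : Tendsto (fun x => (1 - cos x) ^ ((1 - a) / (2 * b))) (𝓝[<] π)
      (𝓝 (2 ^ ((1 - a) / (2 * b)))) := by
    have : ContinuousAt (fun x => (1 - cos x) ^ ((1 - a) / (2 * b))) π :=
      ContinuousAt.rpow_const (by fun_prop) (Or.inl (by norm_num))
    simpa [cos_pi, one_add_one_eq_two] using this.tendsto.mono_left nhdsWithin_le_nhds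
  have hv : Tendsto (fun x => 1 + cos x) (𝓝[<] π) (𝓝[>] 0) := by
    refine tendsto_nhdsWithin_of_tendsto_nhds_of_eventually_within _ ?_ ?_
    · have : ContinuousAt (fun x => 1 + cos x) π := by fun_prop
      simpa using this.tendsto.mono_left nhdsWithin_le_nhds
    · filter_upwards [Ioo_mem_nhdsLT pi_pos] with x hx using one_add_cos_pos hx
  have hq : -((1 + a) / (2 * b)) < 0 := neg_neg_of_pos (div_pos (by linarith) (by positivity))
  exact ((hu.pos_mul_atTop (rpow_pos_of_pos two_pos _)
    ((tendsto_rpow_neg_nhdsGT_zero hq).comp hv)).const_mul_atTop hb)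

lemma one_sub_abs_le_one_sub_mul_cos (a x : ℝ) : 1 - |a| ≤ 1 - a * cos x := by
  have : |a * cos x| ≤ |a| := by
    rw [abs_mul]; exact mul_le_of_le_one_right (abs_nonneg a) (abs_cos_le_one x)
  linarith [le_abs_self (a * cos x)]

lemma one_sub_mul_cos_pos (ha : |a| < 1) (x : ℝ) : 0 < 1 - a * cos x := by
  linarith [one_sub_abs_le_one_sub_mul_cos a x]

lemma integrableOn_integrand (ha : |a| < 1) (hb : 0 < b) (hx : x ∈ Ioo 0 π) :
    IntegrableOn (integrand a b) (Icc 0 x) := by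
  have hsub : Ioc 0 x ⊆ Ioo 0 π := Ioc_subset_Ioo_right hx.2
  have hderiv : IntegrableOn (fun t => integrand a b t * (1 - a * cos t)) (Ioc 0 x) :=
    integrableOn_deriv_of_nonneg
      ((continuousOn_denom (abs_lt.1 ha).2 hb).mono (Icc_subset_Ico_right hx.2))
      (fun t ht => hasDerivAt_denom hb.ne' (hsub (Ioo_subset_Ioc_self ht)))
      (fun t ht => (mul_pos (integrand_pos hb (hsub (Ioo_subset_Ioc_self ht)))
        (one_sub_mul_cos_pos ha t)).le)
  rw [integrableOn_Icc_iff_integrableOn_Ioc]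
  refine (hderiv.const_mul (1 - |a|)⁻¹).mono'
    ((continuousOn_integrand hb.ne').mono hsub |>.aestronglyMeasurable measurableSet_Ioc) ?_
  filter_upwards [ae_restrict_mem measurableSet_Ioc] with t ht
  have hpos := integrand_pos (a := a) hb (hsub ht)
  rw [norm_of_nonneg hpos.le, inv_mul_eq_div, le_div_iff₀ (by linarith)]
  exact mul_le_mul_of_nonneg_left (one_sub_abs_le_one_sub_mul_cos a t) hpos.le

lemma hasDerivAt_primitive (ha : |a| < 1) (hb : 0 < b) (hx : x ∈ Ioo 0 π) :
    HasDerivAt (primitive a b) (integrand a b x) x :=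
  integral_hasDerivAt_right
    ((intervalIntegrable_iff_integrableOn_Icc_of_le hx.1.le).2 (integrableOn_integrand ha hb hx))
    ((continuousOn_integrand hb.ne').stronglyMeasurableAtFilter isOpen_Ioo x hx)
    ((continuousOn_integrand hb.ne').continuousAt (Ioo_mem_nhds hx.1 hx.2))

lemma tendsto_primitive_zero (ha : |a| < 1) (hb : 0 < b) :
    Tendsto (primitive a b) (𝓝[>] 0) (𝓝 0) := by
  have hπ2 : π / 2 ∈ Ioo 0 π := ⟨by linarith [pi_pos], by linarith [pi_pos]⟩
  have hcont := continuousOn_primitive_interval (μ := volume)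
    (by rw [uIcc_of_le hπ2.1.le]; exact integrableOn_integrand ha hb hπ2)
  rw [uIcc_of_le hπ2.1.le] at hcont
  have h0 := (continuousWithinAt_Icc_iff_Ici hπ2.1).1 (hcont 0 ⟨le_rfl, hπ2.1.le⟩)
  have := (h0.mono Ioi_subset_Ici_self).tendsto
  rwa [integral_same] at this

lemma integrand_div_deriv_denom (hb : 0 < b) (hx : x ∈ Ioo 0 π) :
    integrand a b x / (integrand a b x * (1 - a * cos x)) = (1 - a * cos x)⁻¹ := by
  rw [div_mul_cancel_left₀ (integrand_pos hb hx).ne']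

lemma tendsto_primitive_div_denom_zero (ha : |a| < 1) (hb : 0 < b) :
    Tendsto (fun x => primitive a b x / denom a b x) (𝓝[>] 0) (𝓝 (1 - a)⁻¹) := by
  have hdenom : Tendsto (denom a b) (𝓝[>] 0) (𝓝 0) := by
    have := (continuousWithinAt_Ico_iff_Ici pi_pos).1 (continuousOn_denom (abs_lt.1 ha).2 hb 0
      ⟨le_rfl, pi_pos⟩)
    simpa [denom_zero (abs_lt.1 ha).2 hb] using (this.mono Ioi_subset_Ici_self).tendsto
  refine HasDerivAt.lhopital_zero_right_on_Ioo pi_pos (fun x hx => hasDerivAt_primitive ha hb hx)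
    (fun x hx => hasDerivAt_denom hb.ne' hx)
    (fun x hx => (mul_pos (integrand_pos hb hx) (one_sub_mul_cos_pos ha x)).ne')
    (tendsto_primitive_zero ha hb) hdenom ?_
  have hcont : ContinuousAt (fun x => (1 - a * cos x)⁻¹) 0 :=
    ContinuousAt.inv₀ (by fun_prop) (one_sub_mul_cos_pos ha 0).ne'
  have hlim : Tendsto (fun x => (1 - a * cos x)⁻¹) (𝓝[>] 0) (𝓝 (1 - a)⁻¹) := by
    simpa using hcont.tendsto.mono_left nhdsWithin_le_nhds
  refine hlim.congr' ?_
  filter_upwards [Ioo_mem_nhdsGT pi_pos] with x hx using (integrand_div_deriv_denom hb hx).symm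

lemma tendsto_primitive_div_denom_pi (ha : |a| < 1) (hb : 0 < b) :
    Tendsto (fun x => primitive a b x / denom a b x) (𝓝[<] π) (𝓝 (1 + a)⁻¹) := by
  refine HasDerivAt.lhopital_atTop_left_on_Ioo pi_pos (fun x hx => hasDerivAt_primitive ha hb hx)
    (fun x hx => hasDerivAt_denom hb.ne' hx)
    (fun x hx => mul_pos (integrand_pos hb hx) (one_sub_mul_cos_pos ha x))
    (tendsto_denom_pi (abs_lt.1 ha).1 hb) ?_
  have hcont : ContinuousAt (fun x => (1 - a * cos x)⁻¹) π :=
    ContinuousAt.inv₀ (by fun_prop) (one_sub_mul_cos_pos ha π).ne'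
  have hlim : Tendsto (fun x => (1 - a * cos x)⁻¹) (𝓝[<] π) (𝓝 (1 + a)⁻¹) := by
    simpa using hcont.tendsto.mono_left nhdsWithin_le_nhds
  refine hlim.congr' ?_
  filter_upwards [Ioo_mem_nhdsLT pi_pos] with x hx using (integrand_div_deriv_denom hb hx).symm

noncomputable def extension (a b x : ℝ) : ℝ :=
  if x = 0 then (1 - a)⁻¹ else if x = π then (1 + a)⁻¹ else primitive a b x / denom a b x

lemma extension_eqOn : EqOn (extension a b) (fun x => primitive a b x / denom a b x) (Ioo 0 π) :=
  fun x hx => by simp [extension, hx.1.ne', hx.2.ne]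

lemma continuousOn_extension (ha : |a| < 1) (hb : 0 < b) :
    ContinuousOn (extension a b) (Icc 0 π) := by
  refine continuousOn_Icc_of_continuousOn_Ioo pi_pos ?_ ?_ ?_
  · refine ContinuousOn.congr (fun x hx => ?_) extension_eqOn
    exact ((hasDerivAt_primitive ha hb hx).continuousAt.div
      (hasDerivAt_denom hb.ne' hx).continuousAt (denom_pos hb hx).ne').continuousWithinAt
  · rw [show extension a b 0 = (1 - a)⁻¹ by simp [extension]]
    exact (tendsto_primitive_div_denom_zero ha hb).congr'
      (eventuallyEq_of_mem (Ioo_mem_nhdsGT pi_pos) extension_eqOn.symm)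
  · rw [show extension a b π = (1 + a)⁻¹ by simp [extension, pi_ne_zero]]
    exact (tendsto_primitive_div_denom_pi ha hb).congr'
      (eventuallyEq_of_mem (Ioo_mem_nhdsLT pi_pos) extension_eqOn.symm)

end PeriodicSolution

open PeriodicSolution in
/-- For `a, b > 0` with `2a + b < 2`, the even extension of
`y₀(x) = (1/b)(sin x)^{a/b}(cot(x/2))^{1/b} ∫₀ˣ (sin t)^{-a/b-1}(tan(t/2))^{1/b} dt`
extends to a continuous function on `[−π, π]` with `y₀(±π) = 1/(1+a)` and
`y₀(0) = 1/(1−a)`; in particular `y₀` satisfies periodic boundary conditions. -/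
theorem stmt18 (a b : ℝ) (ha : 0 < a) (hb : 0 < b) (hab : 2*a + b < 2) :
    ∃ Y : ℝ → ℝ, ContinuousOn Y (Icc (-π) π) ∧
      (∀ x ∈ Ioo (0:ℝ) π,
        Y x = (1/b) * (Real.sin x) ^ (a/b) * (Real.cot (x/2)) ^ ((1:ℝ)/b) *
          ∫ t in (0:ℝ)..x, (Real.sin t) ^ (-(a/b) - 1) * (Real.tan (t/2)) ^ ((1:ℝ)/b)) ∧
      (∀ x ∈ Ioo (-π) (0:ℝ), Y x = Y (-x)) ∧
      Y (-π) = 1/(1+a) ∧ Y π = 1/(1+a) ∧ Y 0 = 1/(1-a) := by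
  have ha' : |a| < 1 := abs_lt.2 ⟨by linarith, by linarith⟩
  refine ⟨fun x => extension a b |x|, ?_, fun x hx => ?_, fun x _ => by simp only [abs_neg],
    ?_, ?_, ?_⟩
  · exact (continuousOn_extension ha' hb).comp continuous_abs.continuousOn
      fun x hx => ⟨abs_nonneg x, abs_le.2 hx⟩
  · change extension a b |x| = _
    rw [abs_of_pos hx.1, extension_eqOn hx]
    exact primitive_div_denom_eq hb.ne' hx
  all_goals simp [extension, pi_ne_zero, abs_of_pos pi_pos]
end
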